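/- arXiv:2203.05411 — 2 statements merged into one kernel-verified Lean document; each statement's English description precedes it below -/
import Mathlib

section
/- (Proposition 1: optimality of transmitting at the minimal required rate.) Let a > 0, c > 0, b ≥ 0, d ≥ 0, σ_U² > 0, σ_D² > 0, γ_U > 0, γ_D > 0 with a·c > γ_U·γ_D·b·d, and define p̄_D = γ_D·(γ_U·σ_U²·d + a·σ_D²) / (a·c − γ_U·γ_D·b·d) and p̄_U = γ_U·(p̄_D·b + σ_U²) / a. Then every pair (p_U, p_D) with p_U ≥ 0, p_D ≥ 0 satisfying the rate constraints p_U·a ≥ γ_U·(p_D·b + σ_U²) and p_D·c ≥ γ_D·(p_U·d + σ_D²) satisfies p_U ≥ p̄_U and p_D ≥ p̄_D; in particular p_U + p_D ≥ p̄_U + p̄_D, so the total transmit power is minimized exactly when both rate constraints hold with equality. -/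
/-!
Multiplying the uplink constraint by `γD * d ≥ 0` and the downlink constraint by `a > 0` and adding
eliminates `pU`, leaving `pD * (a * c - γU * γD * b * d) ≥ γD * (γU * σU2 * d + a * σD2)`; since the
bracket is positive this is `pD ≥ pbarD`. The uplink constraint is monotone in `pD`, so it then gives
`pU ≥ pbarU`.
-/

section PowerControl

variable {a b c d σU2 σD2 γU γD pU pD : ℝ}

theorem downlink_bound_of_constraints (ha : 0 ≤ a) (hγDd : 0 ≤ γD * d)
    (hU : γU * (pD * b + σU2) ≤ pU * a) (hD : γD * (pU * d + σD2) ≤ pD * c) :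
    γD * (γU * σU2 * d + a * σD2) ≤ pD * (a * c - γU * γD * b * d) := by
  linear_combination (γD * d) * hU + a * hD

theorem uplink_bound_of_constraints {q : ℝ} (ha : 0 < a) (hγU : 0 ≤ γU) (hb : 0 ≤ b)
    (hq : q ≤ pD) (hU : γU * (pD * b + σU2) ≤ pU * a) :
    γU * (q * b + σU2) / a ≤ pU := by
  rw [div_le_iff₀ ha]
  calc γU * (q * b + σU2) ≤ γU * (pD * b + σU2) := by gcongr
    _ ≤ pU * a := hU

end PowerControl

theorem stmt_2_general
    (a c b d σU2 σD2 γU γD : ℝ)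
    (ha : 0 < a) (hb : 0 ≤ b) (hd : 0 ≤ d)
    (hγU : 0 < γU) (hγD : 0 < γD)
    (hstab : a * c > γU * γD * b * d)
    (pbarD pbarU : ℝ)
    (hpbarD : pbarD = γD * (γU * σU2 * d + a * σD2) / (a * c - γU * γD * b * d))
    (hpbarU : pbarU = γU * (pbarD * b + σU2) / a) :
    ∀ pU pD : ℝ, 0 ≤ pU → 0 ≤ pD →
      pU * a ≥ γU * (pD * b + σU2) →
      pD * c ≥ γD * (pU * d + σD2) →
      pU ≥ pbarU ∧ pD ≥ pbarD ∧ pU + pD ≥ pbarU + pbarD := by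
  intro pU pD _ _ hU hD
  have hpD : pbarD ≤ pD := by
    rw [hpbarD, div_le_iff₀ (sub_pos.2 hstab)]
    exact downlink_bound_of_constraints ha.le (by positivity) hU hD
  have hpU : pbarU ≤ pU := hpbarU ▸ uplink_bound_of_constraints ha hγU.le hb hpD hU
  exact ⟨hpU, hpD, add_le_add hpU hpD⟩

/-- Proposition 1: optimality of transmitting at the minimal required rate.
Every feasible power pair dominates the closed-form pair componentwise, hence
the total transmit power is minimized exactly when both rate constraints hold
with equality. -/
theorem stmt_2
    (a c b d σU2 σD2 γU γD : ℝ)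
    (ha : 0 < a) (hc : 0 < c) (hb : 0 ≤ b) (hd : 0 ≤ d)
    (hσU : 0 < σU2) (hσD : 0 < σD2) (hγU : 0 < γU) (hγD : 0 < γD)
    (hstab : a * c > γU * γD * b * d)
    (pbarD pbarU : ℝ)
    (hpbarD : pbarD = γD * (γU * σU2 * d + a * σD2) / (a * c - γU * γD * b * d))
    (hpbarU : pbarU = γU * (pbarD * b + σU2) / a) :
    ∀ pU pD : ℝ, 0 ≤ pU → 0 ≤ pD →
      pU * a ≥ γU * (pD * b + σU2) →
      pD * c ≥ γD * (pU * d + σD2) →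
      pU ≥ pbarU ∧ pD ≥ pbarD ∧ pU + pD ≥ pbarU + pbarD :=
  stmt_2_general a c b d σU2 σD2 γU γD ha hb hd hγU hγD hstab pbarD pbarU hpbarD hpbarU
end

section
/- (Monotonicity of the minimal powers in the uplink rate threshold.) Let a > 0, c > 0, b ≥ 0, d ≥ 0, σ_U² > 0, σ_D² > 0, γ_D > 0 be fixed, and for γ_U > 0 with a·c > γ_U·γ_D·b·d define p̄_D(γ_U) = γ_D·(γ_U·σ_U²·d + a·σ_D²) / (a·c − γ_U·γ_D·b·d) and p̄_U(γ_U) = γ_U·(p̄_D(γ_U)·b + σ_U²) / a. If 0 < γ_U < γ_U′ and a·c > γ_U′·γ_D·b·d, then p̄_U(γ_U′) > p̄_U(γ_U), p̄_D(γ_U′) ≥ p̄_D(γ_U), and p̄_U(γ_U′) + p̄_D(γ_U′) > p̄_U(γ_U) + p̄_D(γ_U). -/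
/-!
Both minimal powers are explicit: `p̄_D` is a fraction whose numerator is nonnegative and
nondecreasing in `γ_U` and whose denominator is positive and nonincreasing, so `p̄_D` is
nondecreasing; then `p̄_U = γ_U (p̄_D b + σ_U²) / a` is a product of a strictly increasing
positive factor and a nondecreasing positive one.
-/

noncomputable def downlinkPower (a c b d σU2 σD2 γD γU : ℝ) : ℝ :=
  γD * (γU * σU2 * d + a * σD2) / (a * c - γU * γD * b * d)

noncomputable def uplinkPower (a b σU2 γU pD : ℝ) : ℝ :=
  γU * (pD * b + σU2) / a

section

variable {a c b d σU2 σD2 γD : ℝ}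

lemma downlinkPower_nonneg (ha : 0 ≤ a) (hd : 0 ≤ d) (hσU : 0 ≤ σU2) (hσD : 0 ≤ σD2)
    (hγD : 0 ≤ γD) {γU : ℝ} (hγU : 0 ≤ γU) (hstab : γU * γD * b * d < a * c) :
    0 ≤ downlinkPower a c b d σU2 σD2 γD γU := by
  unfold downlinkPower
  have hnum : 0 ≤ γU * σU2 * d + a * σD2 := by positivity
  exact div_nonneg (mul_nonneg hγD hnum) (sub_nonneg.2 hstab.le)

lemma downlinkPower_le_downlinkPower (ha : 0 ≤ a) (hb : 0 ≤ b) (hd : 0 ≤ d)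
    (hσU : 0 ≤ σU2) (hσD : 0 ≤ σD2) (hγD : 0 ≤ γD) {x y : ℝ} (hx : 0 ≤ x) (hxy : x ≤ y)
    (hstab : y * γD * b * d < a * c) :
    downlinkPower a c b d σU2 σD2 γD x ≤ downlinkPower a c b d σU2 σD2 γD y := by
  have hden : x * γD * b * d ≤ y * γD * b * d := by gcongr
  have hnum : γD * (x * σU2 * d + a * σD2) ≤ γD * (y * σU2 * d + a * σD2) := by gcongr
  have hy : 0 ≤ y := hx.trans hxy
  exact div_le_div₀ (by positivity) hnum (sub_pos.2 hstab) (by linarith)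

end

lemma uplinkPower_lt_uplinkPower {a b σU2 : ℝ} (ha : 0 < a) (hb : 0 ≤ b) (hσU : 0 < σU2)
    {x y p q : ℝ} (hx : 0 < x) (hxy : x < y) (hp : 0 ≤ p) (hpq : p ≤ q) :
    uplinkPower a b σU2 x p < uplinkPower a b σU2 y q := by
  unfold uplinkPower
  have hload : p * b + σU2 ≤ q * b + σU2 := by gcongr
  have hload_pos : 0 < p * b + σU2 := by positivity
  exact div_lt_div_of_pos_right (mul_lt_mul_of_lt_of_le_of_nonneg_of_pos hxy hload hx.le
    (hload_pos.trans_le hload)) ha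

theorem stmt_4_general
    (a c b d σU2 σD2 γD : ℝ)
    (ha : 0 < a) (hb : 0 ≤ b) (hd : 0 ≤ d)
    (hσU : 0 < σU2) (hσD : 0 < σD2) (hγD : 0 < γD)
    (pbarD pbarU : ℝ → ℝ)
    (hpbarD : ∀ γU : ℝ,
      pbarD γU = γD * (γU * σU2 * d + a * σD2) / (a * c - γU * γD * b * d))
    (hpbarU : ∀ γU : ℝ, pbarU γU = γU * (pbarD γU * b + σU2) / a)
    (γU γU' : ℝ) (hγU : 0 < γU) (hlt : γU < γU')
    (hstab' : a * c > γU' * γD * b * d) :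
    pbarU γU' > pbarU γU ∧
    pbarD γU' ≥ pbarD γU ∧
    pbarU γU' + pbarD γU' > pbarU γU + pbarD γU := by
  have hstab : γU * γD * b * d < a * c := by
    have : γU * γD * b * d ≤ γU' * γD * b * d := by gcongr
    linarith
  have hD0 : 0 ≤ pbarD γU := by
    rw [hpbarD]
    exact downlinkPower_nonneg ha.le hd hσU.le hσD.le hγD.le hγU.le hstab
  have hD : pbarD γU ≤ pbarD γU' := by
    rw [hpbarD, hpbarD]
    exact downlinkPower_le_downlinkPower ha.le hb hd hσU.le hσD.le hγD.le hγU.le hlt.le hstab'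
  have hU : pbarU γU < pbarU γU' := by
    rw [hpbarU, hpbarU]
    exact uplinkPower_lt_uplinkPower ha hb hσU hγU hlt hD0 hD
  exact ⟨hU, hD, add_lt_add_of_lt_of_le hU hD⟩

/-- Monotonicity of the minimal powers in the uplink SINR threshold: if the
uplink threshold increases (while the stability condition continues to hold),
the minimal uplink power strictly increases, the minimal downlink power does
not decrease, and the total transmit power strictly increases. -/
theorem stmt_4
    (a c b d σU2 σD2 γD : ℝ)
    (ha : 0 < a) (hc : 0 < c) (hb : 0 ≤ b) (hd : 0 ≤ d)
    (hσU : 0 < σU2) (hσD : 0 < σD2) (hγD : 0 < γD)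
    (pbarD pbarU : ℝ → ℝ)
    (hpbarD : ∀ γU : ℝ,
      pbarD γU = γD * (γU * σU2 * d + a * σD2) / (a * c - γU * γD * b * d))
    (hpbarU : ∀ γU : ℝ, pbarU γU = γU * (pbarD γU * b + σU2) / a)
    (γU γU' : ℝ) (hγU : 0 < γU) (hlt : γU < γU')
    (hstab' : a * c > γU' * γD * b * d) :
    pbarU γU' > pbarU γU ∧
    pbarD γU' ≥ pbarD γU ∧
    pbarU γU' + pbarD γU' > pbarU γU + pbarD γU :=
  stmt_4_general a c b d σU2 σD2 γD ha hb hd hσU hσD hγD pbarD pbarU hpbarD hpbarU γU γU' hγU hlt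
    hstab'
end
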